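/- In a discounted MDP, if two policies π and π' differ in exactly one state (they are neighbors), then they are comparable: either v^π(s) ≤ v^{π'}(s) for all states s, or v^{π'}(s) ≤ v^π(s) for all states s. -/

import Mathlib

/-- The transition matrix induced by a policy. -/
noncomputable def polMatrix {n k : ℕ} (P : Fin n → Fin k → Fin n → ℝ)
    (π : Fin n → Fin k) : Matrix (Fin n) (Fin n) ℝ :=
  Matrix.of fun s s' => P s (π s) s'

/-- The reward vector induced by a policy. -/
noncomputable def polReward {n k : ℕ} (r : Fin n → Fin k → ℝ)
    (π : Fin n → Fin k) : Fin n → ℝ :=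
  fun s => r s (π s)

/-- The value vector of a policy: `v^π = ∑_{i=0}^∞ γ^i (P^π)^i r^π`. -/
noncomputable def polValue {n k : ℕ} (P : Fin n → Fin k → Fin n → ℝ)
    (r : Fin n → Fin k → ℝ) (γ : ℝ) (π : Fin n → Fin k) : Fin n → ℝ :=
  ∑' i : ℕ, γ ^ i • (polMatrix P π ^ i).mulVec (polReward r π)

/-- `π ⪯ π'` : the policy `π'` dominates `π`. -/
def Dominates {n k : ℕ} (P : Fin n → Fin k → Fin n → ℝ) (r : Fin n → Fin k → ℝ)
    (γ : ℝ) (π π' : Fin n → Fin k) : Prop :=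
  ∀ s, polValue P r γ π s ≤ polValue P r γ π' s

/-- `π ≺ π'` : the policy `π'` strictly dominates `π`. -/
def StrictDominates {n k : ℕ} (P : Fin n → Fin k → Fin n → ℝ) (r : Fin n → Fin k → ℝ)
    (γ : ℝ) (π π' : Fin n → Fin k) : Prop :=
  Dominates P r γ π π' ∧ ∃ s, polValue P r γ π s < polValue P r γ π' s

/-- A set of state-action pairs is well-defined if it contains each state at most once. -/
def WellDefined {n k : ℕ} (U : Set (Fin n × Fin k)) : Prop :=
  ∀ s a a', (s, a) ∈ U → (s, a') ∈ U → a = a'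

-- `π ⊕ U` : the policy obtained from `π` by switching the action at `s` to `a`
-- for each `(s, a) ∈ U` (intended for well-defined `U`).
open Classical in
noncomputable def switch {n k : ℕ} (π : Fin n → Fin k) (U : Set (Fin n × Fin k)) :
    Fin n → Fin k :=
  fun s => if h : ∃ a, (s, a) ∈ U then h.choose else π s

/-- The improvement set `T^π = {(s,a) : π ⊕ {(s,a)} ≻ π}`. -/
def improvementSet {n k : ℕ} (P : Fin n → Fin k → Fin n → ℝ) (r : Fin n → Fin k → ℝ)
    (γ : ℝ) (π : Fin n → Fin k) : Set (Fin n × Fin k) :=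
  {p | StrictDominates P r γ π (Function.update π p.1 p.2)}

/-- The set of improvement states `S^π`. -/
def improvementStates {n k : ℕ} (P : Fin n → Fin k → Fin n → ℝ) (r : Fin n → Fin k → ℝ)
    (γ : ℝ) (π : Fin n → Fin k) : Set (Fin n) :=
  {s | ∃ a, (s, a) ∈ improvementSet P r γ π}

/-!
Write `v = v^π`, `v' = v^{π'}` and let `d = r^{π'} + γ P^{π'} v - v` be the one-step advantage of
`π'` over `π`. Subtracting the Bellman equations gives `v' - v = d + γ P^{π'} (v' - v)`, whose
unique solution is `v' - v = ∑ γ^i (P^{π'})^i d`. By the Bellman equation for `π`, `d` vanishes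
at every state where `π` and `π'` agree, so for neighbours it is supported on one state and has a
sign there; the matrices `(P^{π'})^i` are nonnegative, so `v' - v` has that sign everywhere.
-/

namespace Matrix

variable {ι : Type*} [Fintype ι] [DecidableEq ι] {M : Matrix ι ι ℝ} {γ : ℝ}

/-- The resolvent `(1 - γ • M)⁻¹ *ᵥ w`, written as its Neumann series. -/
noncomputable def discountedSum (γ : ℝ) (M : Matrix ι ι ℝ) (w : ι → ℝ) : ι → ℝ :=
  ∑' i : ℕ, γ ^ i • (M ^ i) *ᵥ w

theorem norm_mulVec_le_of_mem_rowStochastic (hM : M ∈ rowStochastic ℝ ι) (w : ι → ℝ) :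
    ‖M *ᵥ w‖ ≤ ‖w‖ := by
  refine (pi_norm_le_iff_of_nonneg (norm_nonneg w)).2 fun s => ?_
  calc ‖(M *ᵥ w) s‖ = |∑ t, M s t * w t| := rfl
    _ ≤ ∑ t, |M s t * w t| := Finset.abs_sum_le_sum_abs _ _
    _ ≤ ∑ t, M s t * ‖w‖ := by
        gcongr with t
        rw [abs_mul, abs_of_nonneg (nonneg_of_mem_rowStochastic hM)]
        exact mul_le_mul_of_nonneg_left (norm_le_pi_norm w t) (nonneg_of_mem_rowStochastic hM)
    _ = ‖w‖ := by rw [← Finset.sum_mul, sum_row_of_mem_rowStochastic hM, one_mul]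

theorem summable_discountedSum (hM : M ∈ rowStochastic ℝ ι) (hγ : |γ| < 1) (w : ι → ℝ) :
    Summable fun i : ℕ => γ ^ i • (M ^ i) *ᵥ w := by
  refine .of_norm_bounded ((summable_geometric_of_lt_one (abs_nonneg γ) hγ).mul_right ‖w‖)
    fun i => ?_
  rw [norm_smul, norm_pow, Real.norm_eq_abs]
  gcongr
  exact norm_mulVec_le_of_mem_rowStochastic (pow_mem hM i) w

theorem discountedSum_eq_add (hM : M ∈ rowStochastic ℝ ι) (hγ : |γ| < 1) (w : ι → ℝ) :
    discountedSum γ M w = w + γ • M *ᵥ discountedSum γ M w := by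
  let T : (ι → ℝ) →L[ℝ] (ι → ℝ) := γ • (mulVecLin M).toContinuousLinearMap
  have hshift (i : ℕ) : γ ^ (i + 1) • (M ^ (i + 1)) *ᵥ w = T (γ ^ i • (M ^ i) *ᵥ w) := by
    change _ = γ • M *ᵥ (γ ^ i • (M ^ i) *ᵥ w)
    rw [mulVec_smul, mulVec_mulVec, smul_smul, ← pow_succ', ← pow_succ']
  have hs := summable_discountedSum hM hγ w
  calc discountedSum γ M w
      = w + ∑' i : ℕ, γ ^ (i + 1) • (M ^ (i + 1)) *ᵥ w := by
        rw [discountedSum, hs.tsum_eq_zero_add, pow_zero, pow_zero, one_smul, one_mulVec]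
    _ = w + T (discountedSum γ M w) := by simp only [hshift, T.map_tsum hs, discountedSum]
    _ = w + γ • M *ᵥ discountedSum γ M w := rfl

theorem eq_zero_of_eq_smul_mulVec (hM : M ∈ rowStochastic ℝ ι) (hγ : |γ| < 1) {x : ι → ℝ}
    (hx : x = γ • M *ᵥ x) : x = 0 := by
  have hle : ‖x‖ ≤ |γ| * ‖x‖ :=
    calc ‖x‖ = |γ| * ‖M *ᵥ x‖ := by rw [← Real.norm_eq_abs, ← norm_smul, ← hx]
      _ ≤ |γ| * ‖x‖ := by gcongr; exact norm_mulVec_le_of_mem_rowStochastic hM x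
  exact norm_le_zero_iff.1 (by nlinarith [norm_nonneg x])

theorem eq_discountedSum_of_eq_add (hM : M ∈ rowStochastic ℝ ι) (hγ : |γ| < 1)
    {w x : ι → ℝ} (hx : x = w + γ • M *ᵥ x) : x = discountedSum γ M w := by
  refine sub_eq_zero.1 (eq_zero_of_eq_smul_mulVec hM hγ ?_)
  conv_lhs => rw [hx, discountedSum_eq_add hM hγ w]
  rw [mulVec_sub, smul_sub]
  abel

theorem discountedSum_nonneg (hM : M ∈ rowStochastic ℝ ι) (hγ : 0 ≤ γ) {w : ι → ℝ}
    (hw : 0 ≤ w) : 0 ≤ discountedSum γ M w :=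
  tsum_nonneg fun i =>
    smul_nonneg (pow_nonneg hγ i) (nonneg_mulVec_of_mem_rowStochastic (pow_mem hM i) hw)

theorem discountedSum_neg (w : ι → ℝ) : discountedSum γ M (-w) = -discountedSum γ M w := by
  simp only [discountedSum, mulVec_neg, smul_neg, tsum_neg]

theorem discountedSum_nonpos (hM : M ∈ rowStochastic ℝ ι) (hγ : 0 ≤ γ) {w : ι → ℝ}
    (hw : w ≤ 0) : discountedSum γ M w ≤ 0 :=
  neg_nonneg.1 (discountedSum_neg (M := M) w ▸ discountedSum_nonneg hM hγ (neg_nonneg.2 hw))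

end Matrix

theorem nonneg_or_nonpos_of_support_subset_singleton {ι α : Type*} [DecidableEq ι]
    [Zero α] [LinearOrder α] {d : ι → α} {s₀ : ι} (hd : Function.support d ⊆ {s₀}) :
    0 ≤ d ∨ d ≤ 0 := by
  have hsingle : d = Pi.single s₀ (d s₀) := by
    ext s
    by_cases hs : s = s₀
    · rw [hs, Pi.single_eq_same]
    · rw [Pi.single_eq_of_ne hs, ← Function.notMem_support]
      exact fun h => hs (hd h)
  rw [hsingle]
  exact (le_total 0 (d s₀)).imp Pi.single_nonneg.2 Pi.single_nonpos.2

open Matrix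

section MDP

variable {n k : ℕ} {P : Fin n → Fin k → Fin n → ℝ} {r : Fin n → Fin k → ℝ} {γ : ℝ}

noncomputable def polAdvantage (P : Fin n → Fin k → Fin n → ℝ) (r : Fin n → Fin k → ℝ) (γ : ℝ)
    (π π' : Fin n → Fin k) : Fin n → ℝ :=
  polReward r π' + γ • polMatrix P π' *ᵥ polValue P r γ π - polValue P r γ π

theorem polMatrix_mem_rowStochastic (hP0 : ∀ s a s', 0 ≤ P s a s')
    (hP1 : ∀ s a, ∑ s', P s a s' = 1) (π : Fin n → Fin k) :
    polMatrix P π ∈ rowStochastic ℝ (Fin n) :=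
  mem_rowStochastic_iff_sum.2 ⟨fun _ _ => hP0 _ _ _, fun _ => hP1 _ _⟩

theorem polValue_eq_add {π : Fin n → Fin k} (hM : polMatrix P π ∈ rowStochastic ℝ _)
    (hγ : |γ| < 1) :
    polValue P r γ π = polReward r π + γ • polMatrix P π *ᵥ polValue P r γ π :=
  discountedSum_eq_add hM hγ _

theorem polAdvantage_apply_eq_zero {π π' : Fin n → Fin k}
    (hM : polMatrix P π ∈ rowStochastic ℝ _) (hγ : |γ| < 1) {s : Fin n} (hs : π' s = π s) :
    polAdvantage P r γ π π' s = 0 := by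
  have hreward : polReward r π' s = polReward r π s := congrArg (r s) hs
  have hrow : (polMatrix P π' *ᵥ polValue P r γ π) s = (polMatrix P π *ᵥ polValue P r γ π) s := by
    simp only [mulVec, dotProduct, polMatrix, of_apply, hs]
  rw [polAdvantage, Pi.sub_apply, Pi.add_apply, Pi.smul_apply, hreward, hrow, sub_eq_zero]
  exact (congrFun (polValue_eq_add hM hγ) s).symm

theorem polValue_sub_eq_discountedSum {π π' : Fin n → Fin k}
    (hM' : polMatrix P π' ∈ rowStochastic ℝ _) (hγ : |γ| < 1) :
    polValue P r γ π' - polValue P r γ π =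
      discountedSum γ (polMatrix P π') (polAdvantage P r γ π π') := by
  refine eq_discountedSum_of_eq_add hM' hγ ?_
  conv_lhs => rw [polValue_eq_add hM' hγ]
  rw [polAdvantage, mulVec_sub, smul_sub]
  abel

end MDP

theorem neighbors_comparable_general (n k : ℕ)
    (P : Fin n → Fin k → Fin n → ℝ) (r : Fin n → Fin k → ℝ) (γ : ℝ)
    (hP0 : ∀ s a s', 0 ≤ P s a s') (hP1 : ∀ s a, ∑ s', P s a s' = 1)
    (hγ0 : 0 ≤ γ) (hγ1 : γ < 1)
    (π π' : Fin n → Fin k)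
    (hnb : (Finset.univ.filter fun s => π s ≠ π' s).card = 1) :
    (∀ s, polValue P r γ π s ≤ polValue P r γ π' s) ∨
    (∀ s, polValue P r γ π' s ≤ polValue P r γ π s) := by
  have hM := polMatrix_mem_rowStochastic hP0 hP1
  have hγ : |γ| < 1 := abs_lt.2 ⟨by linarith, hγ1⟩
  obtain ⟨s₀, hs₀⟩ := Finset.card_eq_one.1 hnb
  have hagree : ∀ s ≠ s₀, π' s = π s := fun s hs => by_contra fun hne => hs <|
    Finset.mem_singleton.1 (hs₀ ▸ Finset.mem_filter.2 ⟨Finset.mem_univ s, Ne.symm hne⟩)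
  have hsupp : Function.support (polAdvantage P r γ π π') ⊆ {s₀} := fun s hs =>
    by_contra fun hne => hs (polAdvantage_apply_eq_zero (hM π) hγ (hagree s hne))
  have hdiff := polValue_sub_eq_discountedSum (r := r) (π := π) (hM π') hγ
  refine (nonneg_or_nonpos_of_support_subset_singleton hsupp).imp (fun h => ?_) (fun h => ?_)
  · exact sub_nonneg.1 (hdiff ▸ discountedSum_nonneg (hM π') hγ0 h)
  · exact sub_nonpos.1 (hdiff ▸ discountedSum_nonpos (hM π') hγ0 h)

theorem neighbors_comparable (n k : ℕ) (hn : 1 ≤ n) (hk : 1 ≤ k)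
    (P : Fin n → Fin k → Fin n → ℝ) (r : Fin n → Fin k → ℝ) (γ : ℝ)
    (hP0 : ∀ s a s', 0 ≤ P s a s') (hP1 : ∀ s a, ∑ s', P s a s' = 1)
    (hγ0 : 0 ≤ γ) (hγ1 : γ < 1)
    (π π' : Fin n → Fin k)
    (hnb : (Finset.univ.filter fun s => π s ≠ π' s).card = 1) :
    (∀ s, polValue P r γ π s ≤ polValue P r γ π' s) ∨
    (∀ s, polValue P r γ π' s ≤ polValue P r γ π s) :=
  neighbors_comparable_general n k P r γ hP0 hP1 hγ0 hγ1 π π' hnb
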